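/- Let f : ℝ₊ × X → X be a continuous semiflow on a Polish space X and x ∈ X with precompact orbit. If x ∈ C_x, then the set {y ∈ C_x : y ∈ C_y and C_y = C_x} is residual in the subspace C_x. -/

import Mathlib

open MeasureTheory Filter Metric Set Topology
open scoped Classical

noncomputable section

/-- The set `S ⊆ ℝ` has density `α` in `[0,∞)`. -/
def HasDens (S : Set ℝ) (α : ℝ) : Prop :=
  Filter.Tendsto (fun T : ℝ => (MeasureTheory.volume (S ∩ Set.Icc 0 T)).toReal / T)
    Filter.atTop (nhds α)

/-- `f` is a continuous semiflow on `X` (time in `[0,∞)`). -/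
def IsSemiflow {X : Type*} [MetricSpace X] (f : ℝ → X → X) : Prop :=
  ContinuousOn (fun p : ℝ × X => f p.1 p.2) (Set.Ici 0 ×ˢ Set.univ) ∧
  (∀ x : X, f 0 x = x) ∧
  (∀ s t : ℝ, 0 ≤ s → 0 ≤ t → ∀ x : X, f s (f t x) = f (s + t) x)

/-- `C` is a center of attraction of the motion `f (t, x)`. -/
def IsCtr {X : Type*} [MetricSpace X] (f : ℝ → X → X) (x : X) (C : Set X) : Prop :=
  IsClosed C ∧ ∀ ε > (0 : ℝ), HasDens {t : ℝ | 0 ≤ t ∧ f t x ∈ Metric.thickening ε C} 1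

/-- `C` is the minimal center of attraction of the motion `f (t, x)`. -/
def IsMCA {X : Type*} [MetricSpace X] (f : ℝ → X → X) (x : X) (C : Set X) : Prop :=
  IsCtr f x C ∧ ∀ C' ⊆ C, IsCtr f x C' → C' = C

/-! Minimality of `C` forces the orbit of `x` to visit every ball centred in `C` with positive
upper density. Consequently `C` is forward invariant (a point leaving `C` would carry a ball of
positive upper density into a region of density zero) and the orbit of `x` is dense in `C`.
Fix a countable family of balls `B` centred in `C` and the densities `δ_B` with which `x` visits
them. Since the time spent in an open set up to time `T` is lower semicontinuous in the starting
point, the points whose orbit visits every `B` with upper density above `δ_B / 2` form a `Gδ`;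
it contains the orbit of `x`, hence is dense. For such a `y` no proper closed `C' ⊂ C` is a
center: `C'` misses a ball around some point of `C`, and the orbit of `y` would visit that ball
with density zero. -/

def densityUpTo (A : Set ℝ) (T : ℝ) : ℝ := volume.real (A ∩ Icc 0 T) / T

section Density

variable {A B A' : Set ℝ} {T s α δ δ' : ℝ}

lemma hasDens_iff : HasDens A α ↔ Tendsto (densityUpTo A) atTop (𝓝 α) := Iff.rfl

lemma volume_inter_Icc_ne_top (A : Set ℝ) (T : ℝ) : volume (A ∩ Icc 0 T) ≠ ⊤ :=
  ((measure_mono inter_subset_right).trans_lt measure_Icc_lt_top).ne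

lemma densityUpTo_nonneg (A : Set ℝ) (hT : 0 ≤ T) : 0 ≤ densityUpTo A T :=
  div_nonneg measureReal_nonneg hT

lemma densityUpTo_mono (h : A ⊆ B) (hT : 0 ≤ T) : densityUpTo A T ≤ densityUpTo B T :=
  div_le_div_of_nonneg_right
    (measureReal_mono (inter_subset_inter_left _ h) (volume_inter_Icc_ne_top B T)) hT

lemma densityUpTo_le_one (A : Set ℝ) (hT : 0 ≤ T) : densityUpTo A T ≤ 1 := by
  refine div_le_one_of_le₀ ?_ hT
  calc volume.real (A ∩ Icc 0 T) ≤ volume.real (Icc (0 : ℝ) T) :=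
        measureReal_mono inter_subset_right measure_Icc_lt_top.ne
    _ = T := by rw [Real.volume_real_Icc_of_le hT, sub_zero]

lemma densityUpTo_le_add (h : A ⊆ A' ∪ B) (hT : 0 ≤ T) :
    densityUpTo A T ≤ densityUpTo A' T + densityUpTo B T := by
  rw [densityUpTo, densityUpTo, densityUpTo, ← add_div]
  refine div_le_div_of_nonneg_right ?_ hT
  calc volume.real (A ∩ Icc 0 T) ≤ volume.real (A' ∩ Icc 0 T ∪ B ∩ Icc 0 T) := by
        rw [← union_inter_distrib_right]
        exact measureReal_mono (inter_subset_inter_left _ h) (volume_inter_Icc_ne_top _ T)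
    _ ≤ _ := measureReal_union_le _ _

lemma densityUpTo_add_le_one (hA : MeasurableSet A) (hBA : Disjoint B A) (hT : 0 ≤ T) :
    densityUpTo B T + densityUpTo A T ≤ 1 := by
  rw [densityUpTo, densityUpTo, ← add_div,
    ← measureReal_union (hBA.mono inter_subset_left inter_subset_left)
      (hA.inter measurableSet_Icc) (volume_inter_Icc_ne_top B T) (volume_inter_Icc_ne_top A T),
    ← union_inter_distrib_right]
  exact densityUpTo_le_one _ hT

lemma hasDens_Ici : HasDens (Ici 0) 1 := by
  refine hasDens_iff.2 <| tendsto_const_nhds.congr' ((eventually_gt_atTop 0).mono fun T hT => ?_)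
  rw [densityUpTo, inter_eq_right.2 Icc_subset_Ici_self, Real.volume_real_Icc_of_le hT.le,
    sub_zero, div_self hT.ne']

lemma hasDens_empty : HasDens ∅ 0 :=
  hasDens_iff.2 <| tendsto_const_nhds.congr fun T => by simp [densityUpTo]

lemma HasDens.zero_mono (h : A ⊆ B) (hB : HasDens B 0) : HasDens A 0 :=
  tendsto_of_tendsto_of_tendsto_of_le_of_le' tendsto_const_nhds hB
    ((eventually_ge_atTop 0).mono fun _ hT => densityUpTo_nonneg A hT)
    ((eventually_ge_atTop 0).mono fun _ hT => densityUpTo_mono h hT)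

lemma HasDens.one_of_subset_union (h : A ⊆ A' ∪ B) (hA : HasDens A 1) (hB : HasDens B 0) :
    HasDens A' 1 :=
  tendsto_of_tendsto_of_tendsto_of_le_of_le'
    (by simpa using (hasDens_iff.1 hA).sub (hasDens_iff.1 hB)) tendsto_const_nhds
    ((eventually_ge_atTop 0).mono fun _ hT => sub_le_iff_le_add.2 (densityUpTo_le_add h hT))
    ((eventually_ge_atTop 0).mono fun _ hT => densityUpTo_le_one A' hT)

lemma HasDens.one_mono (h : A ⊆ A') (hA : HasDens A 1) : HasDens A' 1 :=
  hA.one_of_subset_union (by rwa [union_empty]) hasDens_empty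

lemma HasDens.zero_of_disjoint (hA : MeasurableSet A) (h : HasDens A 1) (hBA : Disjoint B A) :
    HasDens B 0 :=
  tendsto_of_tendsto_of_tendsto_of_le_of_le' tendsto_const_nhds
    (by simpa using (tendsto_const_nhds (x := (1 : ℝ))).sub (hasDens_iff.1 h))
    ((eventually_ge_atTop 0).mono fun _ hT => densityUpTo_nonneg B hT)
    ((eventually_ge_atTop 0).mono fun _ hT =>
      le_sub_iff_add_le.2 (densityUpTo_add_le_one hA hBA hT))

lemma not_hasDens_zero_iff :
    ¬ HasDens A 0 ↔ ∃ δ > 0, ∃ᶠ T in atTop, δ < densityUpTo A T := by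
  constructor
  · intro h
    have hlow : ∀ a < 0, ∀ᶠ T in atTop, a < densityUpTo A T := fun a ha =>
      (eventually_ge_atTop 0).mono fun T hT => ha.trans_le (densityUpTo_nonneg A hT)
    obtain ⟨δ, hδ, hfreq⟩ : ∃ δ > 0, ∃ᶠ T in atTop, δ ≤ densityUpTo A T := by
      by_contra! hsmall
      exact h <| hasDens_iff.2 <| tendsto_order.2 ⟨hlow, hsmall⟩
    exact ⟨δ / 2, half_pos hδ, hfreq.mono fun T hT => (half_lt_self hδ).trans_le hT⟩
  · rintro ⟨δ, hδ, hfreq⟩ h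
    exact hfreq.and_eventually (hasDens_iff.1 h |>.eventually (gt_mem_nhds hδ))
      |>.exists.elim fun T hT => hT.1.not_gt hT.2

lemma measureReal_inter_le_add {Ω : Type*} [MeasurableSpace Ω] {μ : Measure Ω}
    {A I J K : Set Ω} (h : I ⊆ J ∪ K) (hJ : μ J ≠ ⊤) (hK : μ K ≠ ⊤) :
    μ.real (A ∩ I) ≤ μ.real (A ∩ J) + μ.real K :=
  (measureReal_mono (fun _ ht => (h ht.2).imp (⟨ht.1, ·⟩) id)
    (measure_union_ne_top ((measure_mono inter_subset_right).trans_lt hJ.lt_top).ne hK)).trans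
    (measureReal_union_le _ _)

lemma tendsto_densityUpTo_preimage_add_sub (A : Set ℝ) (hs : 0 ≤ s) :
    Tendsto (fun T => densityUpTo ((· + s) ⁻¹' A) T - densityUpTo A T) atTop (𝓝 0) := by
  have hshift (T : ℝ) :
      volume.real ((· + s) ⁻¹' A ∩ Icc 0 T) = volume.real (A ∩ Icc s (T + s)) := by
    have : (· + s) ⁻¹' A ∩ Icc 0 T = (· + s) ⁻¹' (A ∩ Icc s (T + s)) := by
      ext t; simp
    rw [this, Measure.real, measure_preimage_add_right, Measure.real]
  have hdiff (T : ℝ) :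
      |volume.real ((· + s) ⁻¹' A ∩ Icc 0 T) - volume.real (A ∩ Icc 0 T)| ≤ s := by
    have hright : Icc s (T + s) ⊆ Icc 0 T ∪ Icc T (T + s) :=
      Icc_subset_Icc_union_Icc.trans (union_subset_union_left _ (Icc_subset_Icc_left hs))
    have hleft : Icc 0 T ⊆ Icc s (T + s) ∪ Icc 0 s :=
      Icc_subset_Icc_union_Icc.trans <| (union_comm _ _).subset.trans <|
        union_subset_union_left _ (Icc_subset_Icc_right (by linarith))
    have h1 := measureReal_inter_le_add (μ := volume) (A := A) hright measure_Icc_lt_top.ne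
      measure_Icc_lt_top.ne
    have h2 := measureReal_inter_le_add (μ := volume) (A := A) hleft measure_Icc_lt_top.ne
      measure_Icc_lt_top.ne
    rw [Real.volume_real_Icc_of_le (by linarith)] at h1
    rw [Real.volume_real_Icc_of_le hs] at h2
    rw [hshift, abs_sub_le_iff]
    constructor <;> linarith
  refine squeeze_zero_norm' (a := fun T => s / T) ((eventually_gt_atTop 0).mono fun T hT => ?_)
    (tendsto_const_nhds.div_atTop tendsto_id)
  rw [Real.norm_eq_abs, densityUpTo, densityUpTo, ← sub_div, abs_div, abs_of_pos hT]
  exact div_le_div_of_nonneg_right (hdiff T) hT.le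

lemma HasDens.preimage_add (hs : 0 ≤ s) (h : HasDens A α) : HasDens ((· + s) ⁻¹' A) α :=
  hasDens_iff.2 <| by
    simpa using (hasDens_iff.1 h).add (tendsto_densityUpTo_preimage_add_sub A hs)

lemma frequently_lt_densityUpTo_preimage_add (hs : 0 ≤ s) (hδ : δ' < δ)
    (h : ∃ᶠ T in atTop, δ < densityUpTo A T) :
    ∃ᶠ T in atTop, δ' < densityUpTo ((· + s) ⁻¹' A) T :=
  (h.and_eventually ((tendsto_densityUpTo_preimage_add_sub A hs).eventually
    (lt_mem_nhds (sub_neg.2 hδ)))).mono fun _ hT => by linarith [hT.1, hT.2]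

lemma densityUpTo_Ici_inter (A : Set ℝ) : densityUpTo (Ici 0 ∩ A) = densityUpTo A := by
  funext T
  rw [densityUpTo, densityUpTo, inter_assoc, inter_left_comm,
    inter_eq_right.2 Icc_subset_Ici_self]

end Density

lemma thickening_subset_thickening_diff_ball_union_ball {X : Type*} [MetricSpace X]
    (γ ρ : ℝ) (C : Set X) (z : X) :
    thickening γ C ⊆ thickening γ (C \ ball z ρ) ∪ ball z (ρ + γ) := by
  intro w hw
  obtain ⟨c, hc, hwc⟩ := mem_thickening_iff.1 hw
  by_cases hcz : c ∈ ball z ρ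
  · exact Or.inr <| calc dist w z ≤ dist w c + dist c z := dist_triangle _ _ _
      _ < ρ + γ := by linarith [mem_ball.1 hcz]
  · exact Or.inl <| mem_thickening_iff.2 ⟨c, ⟨hc, hcz⟩, hwc⟩

section Semiflow

variable {X : Type*} {f : ℝ → X → X} {x y z : X} {C U V : Set X} {s T δ δ' ε : ℝ}

def visits (f : ℝ → X → X) (y : X) (U : Set X) : Set ℝ := {t | 0 ≤ t ∧ f t y ∈ U}

lemma visits_mono (h : U ⊆ V) : visits f y U ⊆ visits f y V := fun _ ht => ⟨ht.1, h ht.2⟩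

lemma visits_union : visits f y (U ∪ V) = visits f y U ∪ visits f y V := by
  ext; simp [visits, and_or_left]

lemma disjoint_visits (h : Disjoint U V) : Disjoint (visits f y U) (visits f y V) :=
  disjoint_left.2 fun _ hU hV => disjoint_left.1 h hU.2 hV.2

variable [MetricSpace X]

namespace IsSemiflow

lemma continuous_max_zero (hf : IsSemiflow f) : Continuous fun p : ℝ × X => f (max p.1 0) p.2 :=
  hf.1.comp_continuous ((continuous_fst.max continuous_const).prodMk continuous_snd)
    fun p => ⟨le_max_right p.1 0, trivial⟩

lemma continuous_apply (hf : IsSemiflow f) (hs : 0 ≤ s) : Continuous (f s) := by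
  refine (hf.continuous_max_zero.comp (Continuous.prodMk_right s)).congr fun y => ?_
  simp [max_eq_left hs]

lemma measurableSet_visits (hf : IsSemiflow f) (hU : IsOpen U) :
    MeasurableSet (visits f y U) := by
  have : visits f y U = Ici 0 ∩ (fun t => f (max t 0) y) ⁻¹' U := by
    ext t
    simp only [visits, mem_ofPred_eq, mem_inter_iff, mem_Ici, mem_preimage]
    exact and_congr_right fun ht => by rw [max_eq_left ht]
  rw [this]
  exact measurableSet_Ici.inter (hU.preimage (hf.continuous_max_zero.comp
    (continuous_id.prodMk continuous_const))).measurableSet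

lemma visits_apply (hf : IsSemiflow f) (hs : 0 ≤ s) :
    visits f (f s y) U = Ici 0 ∩ (· + s) ⁻¹' visits f y U := by
  ext t
  simp only [visits, mem_ofPred_eq, mem_inter_iff, mem_Ici, mem_preimage]
  exact and_congr_right fun ht => by
    rw [hf.2.2 t s ht hs]
    exact ⟨fun h => ⟨by linarith, h⟩, And.right⟩

lemma visits_subset_preimage_add (hf : IsSemiflow f) (hs : 0 ≤ s) (h : MapsTo (f s) U V) :
    visits f y U ⊆ (· + s) ⁻¹' visits f y V := by
  rintro t ⟨ht, hU⟩
  refine ⟨by linarith, ?_⟩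
  show f (t + s) y ∈ V
  rw [add_comm, ← hf.2.2 s t hs ht]
  exact h hU

lemma frequently_lt_densityUpTo_visits_apply (hf : IsSemiflow f) (hs : 0 ≤ s) (hδ : δ' < δ)
    (h : ∃ᶠ T in atTop, δ < densityUpTo (visits f y U) T) :
    ∃ᶠ T in atTop, δ' < densityUpTo (visits f (f s y) U) T := by
  rw [hf.visits_apply hs, densityUpTo_Ici_inter]
  exact frequently_lt_densityUpTo_preimage_add hs hδ h

lemma lowerSemicontinuous_volume_visits (hf : IsSemiflow f) (hU : IsOpen U) (T : ℝ) :
    LowerSemicontinuous fun y => volume (visits f y U ∩ Icc 0 T) := by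
  intro y c hc
  obtain ⟨K, hKsub, hK, hcK⟩ := ((hf.measurableSet_visits hU).inter
    measurableSet_Icc).exists_lt_isCompact_of_ne_top (volume_inter_Icc_ne_top _ T) hc
  have hnear : ∀ᶠ y' in 𝓝 y, ∀ t ∈ K, f (max t 0) y' ∈ U :=
    hK.eventually_forall_of_forall_eventually fun t ht =>
      (hf.continuous_max_zero.comp continuous_swap).continuousAt.preimage_mem_nhds <|
        hU.mem_nhds (by simpa [max_eq_left (hKsub ht).1.1] using (hKsub ht).1.2)
  filter_upwards [hnear] with y' hy'
  refine hcK.trans_le (measure_mono fun t ht => ⟨⟨(hKsub ht).1.1, ?_⟩, (hKsub ht).2⟩)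
  simpa [max_eq_left (hKsub ht).1.1] using hy' t ht

lemma isOpen_setOf_lt_densityUpTo (hf : IsSemiflow f) (hU : IsOpen U) (δ : ℝ) (hT : 0 < T) :
    IsOpen {y | δ < densityUpTo (visits f y U) T} := by
  rcases lt_or_ge δ 0 with hδ | hδ
  · simp [fun y => hδ.trans_le (densityUpTo_nonneg (visits f y U) hT.le)]
  · have : {y | δ < densityUpTo (visits f y U) T} =
        (fun y => volume (visits f y U ∩ Icc 0 T)) ⁻¹' Ioi (ENNReal.ofReal (δ * T)) := by
      ext y
      simp only [mem_ofPred_eq, mem_preimage, mem_Ioi, densityUpTo, lt_div_iff₀ hT, Measure.real]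
      exact (ENNReal.ofReal_lt_iff_lt_toReal (by positivity) (volume_inter_Icc_ne_top _ _)).symm
    rw [this]
    exact (hf.lowerSemicontinuous_volume_visits hU T).isOpen_preimage _

lemma isGδ_setOf_frequently_lt_densityUpTo (hf : IsSemiflow f) (hU : IsOpen U) (δ : ℝ) :
    IsGδ {y | ∃ᶠ T in atTop, δ < densityUpTo (visits f y U) T} := by
  have : {y | ∃ᶠ T in atTop, δ < densityUpTo (visits f y U) T} =
      ⋂ m : ℕ, ⋃ T ∈ Ici ((m : ℝ) + 1), {y | δ < densityUpTo (visits f y U) T} := by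
    ext y
    simp only [mem_ofPred_eq, mem_iInter, mem_iUnion, mem_Ici, frequently_atTop, exists_prop]
    refine ⟨fun h m => h _, fun h a => ?_⟩
    obtain ⟨m, hm⟩ := exists_nat_ge a
    obtain ⟨T, hT, hδT⟩ := h m
    exact ⟨T, by linarith, hδT⟩
  rw [this]
  exact .iInter_of_isOpen fun m => isOpen_biUnion fun T hT =>
    hf.isOpen_setOf_lt_densityUpTo hU δ (by linarith [mem_Ici.1 hT, m.cast_nonneg (α := ℝ)])

end IsSemiflow

lemma IsCtr.of_forall_mem (hC : IsClosed C) (h : ∀ t, 0 ≤ t → f t y ∈ C) : IsCtr f y C :=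
  ⟨hC, fun _ hε =>
    hasDens_Ici.one_mono fun t ht => ⟨ht, self_subset_thickening hε C (h t ht)⟩⟩

lemma IsMCA.not_hasDens_zero_visits_ball (hC : IsMCA f x C) (hz : z ∈ C) (hε : 0 < ε) :
    ¬ HasDens (visits f x (ball z ε)) 0 := by
  intro h0
  have hctr : IsCtr f x (C \ ball z (ε / 2)) := by
    refine ⟨hC.1.1.sdiff isOpen_ball, fun γ hγ => ?_⟩
    set γ₀ := min γ (ε / 2)
    have hsub : visits f x (thickening γ₀ C) ⊆
        visits f x (thickening γ₀ (C \ ball z (ε / 2))) ∪ visits f x (ball z ε) := by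
      rw [← visits_union]
      refine visits_mono <| (thickening_subset_thickening_diff_ball_union_ball _ _ C z).trans <|
        union_subset_union_right _ (ball_subset_ball ?_)
      linarith [min_le_right γ (ε / 2)]
    exact ((hC.1.2 γ₀ (lt_min hγ (half_pos hε))).one_of_subset_union hsub h0).one_mono
      (visits_mono (thickening_mono (min_le_left _ _) _))
  have hz' : z ∈ C \ ball z (ε / 2) := (hC.2 _ sdiff_subset hctr).symm ▸ hz
  exact hz'.2 (mem_ball_self (half_pos hε))

lemma IsMCA.mapsTo (hf : IsSemiflow f) (hC : IsMCA f x C) (hs : 0 ≤ s) : MapsTo (f s) C C := by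
  intro z hz
  by_contra hfz
  obtain ⟨r, hr, hdisj⟩ :=
    (disjoint_singleton_left.2 hfz).exists_thickenings isCompact_singleton hC.1.1
  rw [thickening_singleton] at hdisj
  obtain ⟨ρ, hρ, hball⟩ := Metric.continuous_iff.1 (hf.continuous_apply hs) z r hr
  have h0 : HasDens (visits f x (ball (f s z) r)) 0 :=
    (hC.1.2 r hr).zero_of_disjoint (hf.measurableSet_visits isOpen_thickening)
      (disjoint_visits hdisj)
  exact hC.not_hasDens_zero_visits_ball hz hρ <|
    (h0.preimage_add hs).zero_mono (hf.visits_subset_preimage_add hs fun b hb => hball b hb)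

lemma IsMCA.dense_orbit (hf : IsSemiflow f) (hC : IsMCA f x C) (hx : x ∈ C) :
    Dense {y : C | ∃ s, 0 ≤ s ∧ f s x = y} := by
  refine Metric.dense_iff.2 fun z r hr => ?_
  obtain ⟨s, hs, hsz⟩ : (visits f x (ball (z : X) r)).Nonempty := nonempty_iff_ne_empty.2
    fun h => hC.not_hasDens_zero_visits_ball z.2 hr (h ▸ hasDens_empty)
  exact ⟨⟨f s x, hC.mapsTo hf hs hx⟩, hsz, s, hs, rfl⟩

lemma IsCtr.isMCA_of_not_hasDens_zero (hf : IsSemiflow f) (hC : IsCtr f y C)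
    (h : ∀ z ∈ C, ∀ ε > 0, ¬ HasDens (visits f y (ball z ε)) 0) : IsMCA f y C := by
  refine ⟨hC, fun C' hC'C hC' => ?_⟩
  by_contra hne
  obtain ⟨z, hzC, hzC'⟩ := exists_of_ssubset (hC'C.ssubset_of_ne hne)
  obtain ⟨r, hr, hdisj⟩ :=
    (disjoint_singleton_left.2 hzC').exists_thickenings isCompact_singleton hC'.1
  rw [thickening_singleton] at hdisj
  exact h z hzC r hr <| (hC'.2 r hr).zero_of_disjoint
    (hf.measurableSet_visits isOpen_thickening) (disjoint_visits hdisj)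

end Semiflow

theorem quasi_weakly_ap_residual_general {X : Type*} [MetricSpace X]
    [TopologicalSpace.SeparableSpace X]
    (f : ℝ → X → X) (hf : IsSemiflow f) (x : X)
    (C : Set X) (hC : IsMCA f x C) (hxC : x ∈ C) :
    {y : C | IsMCA f (y : X) C ∧ (y : X) ∈ C} ∈ residual C := by
  have : Nonempty C := ⟨⟨x, hxC⟩⟩
  obtain ⟨u, hu⟩ := TopologicalSpace.exists_dense_seq C
  choose δ hδ hfreq using fun n k : ℕ => not_hasDens_zero_iff.1 <|
    hC.not_hasDens_zero_visits_ball (u n).2 (Nat.one_div_pos_of_nat (n := k))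
  let G (n k : ℕ) : Set C := Subtype.val ⁻¹'
    {y | ∃ᶠ T in atTop, δ n k / 2 < densityUpTo (visits f y (ball (u n) (1 / (k + 1)))) T}
  have hG : ⋂ n, ⋂ k, G n k ∈ residual C :=
    countable_iInter_mem.2 fun n => countable_iInter_mem.2 fun k =>
      residual_of_dense_Gδ
        ((hf.isGδ_setOf_frequently_lt_densityUpTo isOpen_ball _).preimage continuous_subtype_val)
        ((hC.dense_orbit hf hxC).mono <| by
          rintro ⟨_, _⟩ ⟨s, hs, rfl⟩
          exact hf.frequently_lt_densityUpTo_visits_apply hs (half_lt_self (hδ n k)) (hfreq n k))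
  refine mem_of_superset hG fun y hy => ⟨?_, y.2⟩
  refine (IsCtr.of_forall_mem hC.1.1 fun t ht => hC.mapsTo hf ht y.2).isMCA_of_not_hasDens_zero hf
    fun z hz ε hε h0 => ?_
  obtain ⟨n, hn⟩ := hu.exists_dist_lt ⟨z, hz⟩ (half_pos hε)
  obtain ⟨k, hk⟩ := exists_nat_one_div_lt (half_pos hε)
  have hsub : ball (u n : X) (1 / (k + 1)) ⊆ ball z ε :=
    ball_subset_ball' (by rw [Subtype.dist_eq, dist_comm] at hn; linarith)
  exact not_hasDens_zero_iff.2 ⟨_, half_pos (hδ n k), mem_iInter.1 (mem_iInter.1 hy n) k⟩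
    (h0.zero_mono (visits_mono hsub))

theorem quasi_weakly_ap_residual {X : Type*} [MetricSpace X]
    [TopologicalSpace.SeparableSpace X] [CompleteSpace X]
    (f : ℝ → X → X) (hf : IsSemiflow f) (x : X)
    (horb : IsCompact (closure {y : X | ∃ t : ℝ, 0 ≤ t ∧ f t x = y}))
    (C : Set X) (hC : IsMCA f x C) (hxC : x ∈ C) :
    {y : C | IsMCA f (y : X) C ∧ (y : X) ∈ C} ∈ residual C :=
  quasi_weakly_ap_residual_general f hf x C hC hxC
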